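/- arXiv:1105.0613 — 4 statements merged into one kernel-verified Lean document; each statement's English description precedes it below -/
import Mathlib

section
/- Let ℓ = (l₁,…,lₙ) ∈ ℝⁿ_{>0} be a generic length vector. Then the map F : Ω → ℝⁿ given by F(v₁,…,v_{n−1}) = (|v₁|, |v₂−v₁|, …, |v_{n−1}−v_{n−2}|, |v_{n−1}|), defined on the open set Ω ⊆ (ℝ^d)^{n−1} where v₁ ≠ 0, v_j ≠ v_{j+1}, and v_{n−1} ≠ 0, has ℓ as a regular value; consequently E_d(ℓ) = F^{−1}(ℓ) is a smooth closed manifold of dimension d(n−1) − n. -/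
/-!
At a point of `F⁻¹(ℓ)` every edge `x_j = v_j - v_{j-1}` has length `l_j > 0`, so `F` is
differentiable there with `DF(w)_j = ⟪u_j, w_j - w_{j-1}⟫`, where `u_j = x_j / ‖x_j‖`.
A covector `c` vanishing on the image of `DF` satisfies `c_j u_j = c_{j+1} u_{j+1}` (test it
against a `w` supported at a single vertex), so all `c_j u_j` equal one vector `z`. If `c ≠ 0`
then `z ≠ 0` and every `u_j` is `±z / ‖z‖`, so the closing condition `∑ x_j = 0` becomes
`∑ ±l_j = 0`, contradicting genericity. The fibre is compact because it is closed and every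
vertex is bounded by `∑ l_j`.
-/

/-- The map `F : (ℝ^d)^{n−1} → ℝⁿ`,
`F(v₁,…,v_{n−1}) = (|v₁|, |v₂−v₁|, …, |v_{n−1}−v_{n−2}|, |v_{n−1}|)`,
written via the convention `v_0 = v_n = 0` (indices shifted to start at `0`). -/
noncomputable def Fmap (d n : ℕ) (v : Fin (n - 1) → EuclideanSpace ℝ (Fin d)) :
    Fin n → ℝ := fun j =>
  let V : ℤ → EuclideanSpace ℝ (Fin d) := fun k =>
    if h : 0 ≤ k ∧ k < (n : ℤ) - 1 then v ⟨k.toNat, by omega⟩ else 0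
  ‖V (j : ℤ) - V ((j : ℤ) - 1)‖

/-- The open set `Ω ⊆ (ℝ^d)^{n−1}` where `v₁ ≠ 0`, `v_j ≠ v_{j+1}` and `v_{n−1} ≠ 0`. -/
def OmegaSet (d n : ℕ) (hn : 2 ≤ n) : Set (Fin (n - 1) → EuclideanSpace ℝ (Fin d)) :=
  {v | v ⟨0, by omega⟩ ≠ 0 ∧
       (∀ j : ℕ, (h : j + 1 < n - 1) → v ⟨j, by omega⟩ ≠ v ⟨j + 1, h⟩) ∧
       v ⟨n - 2, by omega⟩ ≠ 0}

open RealInnerProductSpace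

theorem LinearMap.surjective_of_forall_sum_mul_eq_zero {K V ι : Type*} [Field K]
    [AddCommGroup V] [Module K V] [Fintype ι] [DecidableEq ι] (T : V →ₗ[K] ι → K)
    (h : ∀ c : ι → K, (∀ w, ∑ i, c i * T w i = 0) → c = 0) : Function.Surjective T := by
  by_contra hT
  obtain ⟨f, hf0, hrange⟩ :=
    (LinearMap.range T).exists_le_ker_of_lt_top
      (lt_top_iff_ne_top.2 (LinearMap.range_eq_top.not.2 hT))
  have hc := h (fun i => f (Pi.single i 1)) fun w => by
    rw [← LinearMap.mem_ker.1 (hrange ⟨w, rfl⟩), LinearMap.pi_apply_eq_sum_univ f (T w)]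
    refine Finset.sum_congr rfl fun i _ => ?_
    rw [smul_eq_mul, mul_comm]
    congr 2
    ext j
    simp [Pi.single_apply, eq_comm]
  refine hf0 (LinearMap.pi_ext' fun i => LinearMap.ext_ring ?_)
  simpa using congrFun hc i

theorem hasFDerivAt_norm_of_ne_zero {E : Type*} [NormedAddCommGroup E] [InnerProductSpace ℝ E]
    {x : E} (hx : x ≠ 0) : HasFDerivAt (‖·‖) (innerSL ℝ (‖x‖⁻¹ • x)) x := by
  have hsq : HasDerivAt Real.sqrt (1 / (2 * Real.sqrt (‖x‖ ^ 2))) (‖x‖ ^ 2) :=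
    Real.hasDerivAt_sqrt (by positivity)
  have h := hsq.comp_hasFDerivAt x (hasStrictFDerivAt_norm_sq x).hasFDerivAt
  simp only [Function.comp_def, Real.sqrt_sq (norm_nonneg _)] at h
  refine h.congr_fderiv ?_
  ext y
  simp only [smul_apply, innerSL_apply_apply, real_inner_smul_left, smul_eq_mul, nsmul_eq_mul,
    Nat.cast_ofNat]
  field_simp

theorem exists_sign_sum_mul_norm_eq_zero {ι E : Type*} [Fintype ι] [NormedAddCommGroup E]
    [NormedSpace ℝ E] {x : ι → E} (hx : ∀ i, x i ≠ 0) (hsum : ∑ i, x i = 0)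
    {c : ι → ℝ} (hc : c ≠ 0) {z : E} (hcz : ∀ i, c i • ‖x i‖⁻¹ • x i = z) :
    ∃ ε : ι → ℝ, (∀ i, ε i = 1 ∨ ε i = -1) ∧ ∑ i, ε i * ‖x i‖ = 0 := by
  have hunit : ∀ i, ‖‖x i‖⁻¹ • x i‖ = 1 := fun i => norm_smul_inv_norm (hx i)
  have habs : ∀ i, |c i| = ‖z‖ := fun i => by
    rw [← hcz i, norm_smul, hunit, mul_one, Real.norm_eq_abs]
  obtain ⟨i₀, hi₀⟩ := Function.ne_iff.1 hc
  have hz : ‖z‖ ≠ 0 := by rw [← habs i₀]; exact abs_ne_zero.2 hi₀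
  have hc0 : ∀ i, c i ≠ 0 := fun i h => hz (by rw [← habs i, h, abs_zero])
  have hxz : ∀ i, x i = (‖x i‖ / c i) • z := fun i => by
    rw [← hcz i, smul_smul, smul_smul, div_mul_cancel₀ _ (hc0 i),
      mul_inv_cancel₀ (norm_ne_zero_iff.2 (hx i)), one_smul]
  refine ⟨fun i => ‖z‖ / c i, fun i => ?_, ?_⟩
  · dsimp only
    rcases abs_eq (norm_nonneg z) |>.1 (habs i) with h | h <;> rw [h]
    · exact Or.inl (div_self hz)
    · exact Or.inr (by rw [div_neg, div_self hz])
  · have hsum' : (∑ i, ‖x i‖ / c i) • z = 0 := by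
      rw [Finset.sum_smul, ← hsum]; exact Finset.sum_congr rfl fun i _ => (hxz i).symm
    have := (smul_eq_zero.1 hsum').resolve_right (norm_ne_zero_iff.1 hz)
    calc ∑ i, ‖z‖ / c i * ‖x i‖ = ‖z‖ * ∑ i, ‖x i‖ / c i := by
          rw [Finset.mul_sum]; exact Finset.sum_congr rfl fun i _ => by ring
      _ = 0 := by rw [this, mul_zero]

section Polygon

variable {E : Type*} [NormedAddCommGroup E] [NormedSpace ℝ E] {n : ℕ}

-- The vertex `V_k = v_k`, extended by `V_k = 0` for `k ∉ [0, n - 2]`, so that the edges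
-- `V_k - V_{k-1}`, `k = 0, …, n - 1`, close up the polygon.
noncomputable def polygonVertex (n : ℕ) (k : ℤ) : (Fin (n - 1) → E) →L[ℝ] E :=
  if h : 0 ≤ k ∧ k < (n : ℤ) - 1 then ContinuousLinearMap.proj ⟨k.toNat, by omega⟩ else 0

noncomputable def polygonEdge (n : ℕ) (k : ℤ) : (Fin (n - 1) → E) →L[ℝ] E :=
  polygonVertex n k - polygonVertex n (k - 1)

theorem polygonVertex_apply (k : ℤ) (v : Fin (n - 1) → E) :
    polygonVertex n k v =
      if h : 0 ≤ k ∧ k < (n : ℤ) - 1 then v ⟨k.toNat, by omega⟩ else 0 := by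
  unfold polygonVertex
  split_ifs <;> rfl

theorem polygonVertex_of_lt (v : Fin (n - 1) → E) {k : ℕ} (hk : k < n - 1) :
    polygonVertex n k v = v ⟨k, hk⟩ := by
  rw [polygonVertex_apply, dif_pos (by omega)]
  rfl

theorem polygonVertex_eq_zero {k : ℤ} (hk : k < 0 ∨ (n : ℤ) - 1 ≤ k)
    (v : Fin (n - 1) → E) : polygonVertex n k v = 0 := by
  rw [polygonVertex_apply, dif_neg (by omega)]

theorem polygonEdge_apply (k : ℤ) (v : Fin (n - 1) → E) :
    polygonEdge n k v = polygonVertex n k v - polygonVertex n (k - 1) v := rfl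

theorem sum_range_polygonEdge (v : Fin (n - 1) → E) (k : ℕ) :
    ∑ m ∈ Finset.range k, polygonEdge n m v = polygonVertex n ((k : ℤ) - 1) v := by
  induction k with
  | zero => simp [polygonVertex_eq_zero]
  | succ k ih =>
    rw [Finset.sum_range_succ, ih, polygonEdge_apply, Nat.cast_succ, add_sub_cancel_right,
      add_sub_cancel]

theorem sum_polygonEdge (v : Fin (n - 1) → E) : ∑ j : Fin n, polygonEdge n j v = 0 := by
  rw [Fin.sum_univ_eq_sum_range (fun m => polygonEdge n m v), sum_range_polygonEdge,
    polygonVertex_eq_zero (by omega)]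

theorem norm_le_sum_norm_polygonEdge (v : Fin (n - 1) → E) :
    ‖v‖ ≤ ∑ j : Fin n, ‖polygonEdge n j v‖ := by
  refine (pi_norm_le_iff_of_nonneg (Finset.sum_nonneg fun _ _ => norm_nonneg _)).2 fun i => ?_
  rw [← Fin.eta i i.isLt, ← polygonVertex_of_lt v i.isLt, ← add_sub_cancel_right (i : ℤ) 1,
    ← Nat.cast_succ, ← sum_range_polygonEdge,
    Fin.sum_univ_eq_sum_range (fun m => ‖polygonEdge n m v‖)]
  refine (norm_sum_le _ _).trans (Finset.sum_le_sum_of_subset_of_nonneg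
    (Finset.range_subset_range.2 (by omega)) fun _ _ _ => norm_nonneg _)

theorem polygonVertex_single (i : Fin (n - 1)) (e : E) (k : ℤ) :
    polygonVertex n k (Pi.single i e) = if k = i then e else 0 := by
  rw [polygonVertex_apply]
  simp only [Pi.single_apply, Fin.ext_iff]
  split_ifs <;> first | rfl | omega

theorem sum_apply_polygonEdge_single {F : Type*} [AddCommGroup F] (φ : Fin n → E →+ F)
    {i : ℕ} (hi : i + 1 < n) (e : E) :
    ∑ j : Fin n, φ j (polygonEdge n j (Pi.single ⟨i, by omega⟩ e)) =
      φ ⟨i, by omega⟩ e - φ ⟨i + 1, hi⟩ e := by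
  simp only [polygonEdge_apply, polygonVertex_single, map_sub, apply_ite (φ _), map_zero,
    Finset.sum_sub_distrib]
  have hcur : ∀ j : Fin n, (j : ℤ) = i ↔ j = ⟨i, by omega⟩ := fun j => by
    simp [Fin.ext_iff]
  have hnext : ∀ j : Fin n, (j : ℤ) - 1 = i ↔ j = ⟨i + 1, hi⟩ := fun j => by
    simp only [Fin.ext_iff]; omega
  simp only [hcur, hnext, Finset.sum_ite_eq', Finset.mem_univ, if_true]

end Polygon

section InnerProduct

variable {E : Type*} [NormedAddCommGroup E] [InnerProductSpace ℝ E] {n : ℕ}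

theorem smul_eq_smul_of_forall_sum_mul_inner_polygonEdge_eq_zero {u : Fin n → E}
    {c : Fin n → ℝ}
    (h : ∀ w : Fin (n - 1) → E, ∑ j, c j * ⟪u j, polygonEdge n j w⟫ = 0) (i j : Fin n) :
    c i • u i = c j • u j := by
  have hstep : ∀ k (hk : k + 1 < n),
      c ⟨k, by omega⟩ • u ⟨k, by omega⟩ = c ⟨k + 1, hk⟩ • u ⟨k + 1, hk⟩ :=
    fun k hk => ext_inner_right ℝ fun e => sub_eq_zero.1 <| by
      have := sum_apply_polygonEdge_single (fun j => (innerSL ℝ (c j • u j) : E →+ ℝ)) hk e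
      simp only [AddMonoidHom.coe_coe, innerSL_apply_apply, real_inner_smul_left] at this
      rw [real_inner_smul_left, real_inner_smul_left, ← this, h]
  have hfirst : ∀ k (hk : k < n),
      c ⟨k, hk⟩ • u ⟨k, hk⟩ = c ⟨0, by omega⟩ • u ⟨0, by omega⟩ := by
    intro k hk
    induction k with
    | zero => rfl
    | succ k ih => rw [← hstep k hk, ih]
  rw [hfirst i i.isLt, hfirst j j.isLt]

theorem surjective_pi_innerSL_comp_polygonEdge (v : Fin (n - 1) → E)
    (hv : ∀ j : Fin n, polygonEdge n j v ≠ 0)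
    (hgen : ∀ ε : Fin n → ℝ, (∀ j, ε j = 1 ∨ ε j = -1) →
      ∑ j, ε j * ‖polygonEdge n j v‖ ≠ 0) :
    Function.Surjective (ContinuousLinearMap.pi fun j : Fin n =>
      (innerSL ℝ (‖polygonEdge n j v‖⁻¹ • polygonEdge n j v)).comp
        (polygonEdge n j)) := by
  classical
  refine LinearMap.surjective_of_forall_sum_mul_eq_zero (ContinuousLinearMap.toLinearMap _)
    fun c hc => ?_
  by_contra hc0
  obtain ⟨i₀, -⟩ := Function.ne_iff.1 hc0
  have hconst := smul_eq_smul_of_forall_sum_mul_inner_polygonEdge_eq_zero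
    (u := fun j => ‖polygonEdge n j v‖⁻¹ • polygonEdge n j v) hc
  obtain ⟨ε, hε, hsum⟩ :=
    exists_sign_sum_mul_norm_eq_zero hv (sum_polygonEdge v) hc0 fun j => hconst j i₀
  exact hgen ε hε hsum

end InnerProduct

theorem Fmap_eq_norm_polygonEdge (d n : ℕ) :
    Fmap d n = fun (v : Fin (n - 1) → EuclideanSpace ℝ (Fin d)) (j : Fin n) =>
      ‖polygonEdge n j v‖ := by
  funext v j
  simp only [Fmap, polygonEdge_apply, polygonVertex_apply]

theorem hasFDerivAt_Fmap {d n : ℕ} {v : Fin (n - 1) → EuclideanSpace ℝ (Fin d)}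
    (hv : ∀ j : Fin n, polygonEdge n j v ≠ 0) :
    HasFDerivAt (Fmap d n) (ContinuousLinearMap.pi fun j : Fin n =>
      (innerSL ℝ (‖polygonEdge n j v‖⁻¹ • polygonEdge n j v)).comp
        (polygonEdge n j)) v := by
  rw [Fmap_eq_norm_polygonEdge]
  exact hasFDerivAt_pi.2 fun j =>
    (hasFDerivAt_norm_of_ne_zero (hv j)).comp v
      (polygonEdge (E := EuclideanSpace ℝ (Fin d)) n j).hasFDerivAt

theorem mem_OmegaSet_of_polygonEdge_ne_zero {d n : ℕ} (hn : 2 ≤ n)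
    {v : Fin (n - 1) → EuclideanSpace ℝ (Fin d)} (hv : ∀ j : Fin n, polygonEdge n j v ≠ 0) :
    v ∈ OmegaSet d n hn := by
  have hv' : ∀ k (hk : k < n), polygonVertex n k v - polygonVertex n ((k : ℤ) - 1) v ≠ 0 :=
    fun k hk => hv ⟨k, hk⟩
  refine ⟨?_, fun j hj => ?_, ?_⟩
  · have := hv' 0 (by omega)
    rwa [polygonVertex_of_lt v (by omega), polygonVertex_eq_zero (by omega), sub_zero] at this
  · have := hv' (j + 1) (by omega)
    rwa [polygonVertex_of_lt v hj, Nat.cast_succ, add_sub_cancel_right,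
      polygonVertex_of_lt v (k := j) (by omega), sub_ne_zero, ne_comm] at this
  · have := hv' (n - 1) (by omega)
    have hlast : ((n - 1 : ℕ) : ℤ) - 1 = ((n - 2 : ℕ) : ℤ) := by omega
    rwa [polygonVertex_eq_zero (by omega), zero_sub, neg_ne_zero, hlast,
      polygonVertex_of_lt v (k := n - 2) (by omega)] at this

theorem isCompact_Fmap_fiber {d n : ℕ} (l : Fin n → ℝ) :
    IsCompact {v : Fin (n - 1) → EuclideanSpace ℝ (Fin d) | Fmap d n v = l} := by
  have hcont : Continuous (Fmap d n) := by
    rw [Fmap_eq_norm_polygonEdge]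
    exact continuous_pi fun j => (polygonEdge n j).continuous.norm
  refine Metric.isCompact_of_isClosed_isBounded (isClosed_eq hcont continuous_const) ?_
  refine isBounded_iff_forall_norm_le.2 ⟨∑ j, l j, fun v (hv : Fmap d n v = l) => ?_⟩
  calc ‖v‖ ≤ ∑ j : Fin n, ‖polygonEdge n j v‖ := norm_le_sum_norm_polygonEdge v
    _ = ∑ j, l j := by rw [← hv, Fmap_eq_norm_polygonEdge]

theorem stmt_4_general {d n : ℕ} (hn : 2 ≤ n) (l : Fin n → ℝ)
    (hpos : ∀ i, 0 < l i)
    (hgen : ∀ ε : Fin n → ℝ, (∀ i, ε i = 1 ∨ ε i = -1) → ∑ i, ε i * l i ≠ 0) :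
    (∀ v, Fmap d n v = l → v ∈ OmegaSet d n hn) ∧
    (∀ v ∈ OmegaSet d n hn, Fmap d n v = l →
      Function.Surjective (fderiv ℝ (Fmap d n) v)) ∧
    IsCompact {v : Fin (n - 1) → EuclideanSpace ℝ (Fin d) | Fmap d n v = l} := by
  have hnorm : ∀ v, Fmap d n v = l → ∀ j : Fin n, ‖polygonEdge n j v‖ = l j := by
    rintro v rfl j
    rw [Fmap_eq_norm_polygonEdge]
  have hedge : ∀ v, Fmap d n v = l → ∀ j : Fin n, polygonEdge n j v ≠ 0 := fun v hv j =>
    norm_pos_iff.1 (hnorm v hv j ▸ hpos j)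
  refine ⟨fun v hv => mem_OmegaSet_of_polygonEdge_ne_zero hn (hedge v hv),
    fun v _ hv => ?_, isCompact_Fmap_fiber l⟩
  rw [(hasFDerivAt_Fmap (hedge v hv)).fderiv]
  refine surjective_pi_innerSL_comp_polygonEdge v (hedge v hv) ?_
  simpa only [hnorm v hv] using hgen

/-- For a generic length vector `l ∈ ℝⁿ_{>0}` (i.e. `∑ εᵢ lᵢ ≠ 0` for all
signs `εᵢ = ±1`), the map `F` has `l` as a regular value on `Ω`: every point of
`F⁻¹(l)` lies in `Ω`, the derivative of `F` there is surjective, and consequently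
`E_d(l) = F⁻¹(l)` is compact (a smooth closed manifold, by the regular value theorem). -/
theorem stmt_4 {d n : ℕ} (hd : 2 ≤ d) (hn : 2 ≤ n) (l : Fin n → ℝ)
    (hpos : ∀ i, 0 < l i)
    (hgen : ∀ ε : Fin n → ℝ, (∀ i, ε i = 1 ∨ ε i = -1) → ∑ i, ε i * l i ≠ 0) :
    (∀ v, Fmap d n v = l → v ∈ OmegaSet d n hn) ∧
    (∀ v ∈ OmegaSet d n hn, Fmap d n v = l →
      Function.Surjective (fderiv ℝ (Fmap d n) v)) ∧
    IsCompact {v : Fin (n - 1) → EuclideanSpace ℝ (Fin d) | Fmap d n v = l} :=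
  stmt_4_general hn l hpos hgen
end

section
/- Let ℓ ∈ ℝⁿ_{>0}, d ≥ 2, and define f_ℓ : (S^{d−1})ⁿ → ℝ by f_ℓ(u₁,…,uₙ) = −|∑_{j=1}^n l_j u_j|². Then the critical points of f_ℓ lying outside E_d(ℓ) = f_ℓ^{−1}(0) are exactly the tuples (u₁,…,uₙ) with u_j = ±u_k for all j,k (i.e., the tuples lying in some P_J with J long or with J whose complement is long), where P_J = {(u₁,…,uₙ) : u_i = u_j = −u_k for all i,j ∈ J, k ∉ J}. -/
open scoped RealInnerProductSpace

/-- Let `l ∈ ℝⁿ_{>0}`, `d ≥ 2`, and `f_l(u₁,…,uₙ) = −|∑ l_j u_j|²` on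
`(S^{d−1})ⁿ`.  A point `u` of `(S^{d−1})ⁿ` lying outside `E_d(l)` (i.e. with
`S = ∑ l_i u_i ≠ 0`) is a critical point of `f_l` — which, as `df` in the direction
`v ∈ T_{u_j}S^{d−1}` equals `−2⟨l_j v, S⟩`, means: for every `j` and every `v ⊥ u_j`
one has `⟨v, S⟩ = 0` — if and only if `u_j = ± u_k` for all `j,k`; equivalently, iff
`u` lies in some `P_J` with `J` long or with the complement of `J` long. -/
theorem stmt_6 {n d : ℕ} (hd : 2 ≤ d) (l : Fin n → ℝ) (hpos : ∀ i, 0 < l i)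
    (u : Fin n → EuclideanSpace ℝ (Fin d)) (hu : ∀ i, ‖u i‖ = 1)
    (hS : ∑ i, l i • u i ≠ 0) :
    ((∀ j, ∀ v : EuclideanSpace ℝ (Fin d), ⟪v, u j⟫ = 0 → ⟪v, ∑ i, l i • u i⟫ = 0) ↔
        ∀ j k, u j = u k ∨ u j = -u k) ∧
    ((∀ j, ∀ v : EuclideanSpace ℝ (Fin d), ⟪v, u j⟫ = 0 → ⟪v, ∑ i, l i • u i⟫ = 0) ↔
        ∃ J : Finset (Fin n),
          (∀ i ∈ J, ∀ j ∈ J, u i = u j) ∧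
          (∀ i ∉ J, ∀ j ∉ J, u i = u j) ∧
          (∀ i ∈ J, ∀ k ∉ J, u i = -u k) ∧
          (∑ i ∈ Jᶜ, l i < ∑ i ∈ J, l i ∨ ∑ i ∈ J, l i < ∑ i ∈ Jᶜ, l i)) := by
  classical
  have hn : 0 < n := by
    by_contra h
    push_neg at h
    interval_cases n
    simp at hS
  set S : EuclideanSpace ℝ (Fin d) := ∑ i, l i • u i with hSdef
  -- criticality implies S is parallel to each u j
  have key : (∀ j, ∀ v : EuclideanSpace ℝ (Fin d), ⟪v, u j⟫ = 0 → ⟪v, S⟫ = 0) →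
      ∀ j, S = ⟪S, u j⟫ • u j := by
    intro h j
    set c := ⟪S, u j⟫ with hc
    have huj1 : ⟪u j, u j⟫ = 1 := by
      rw [real_inner_self_eq_norm_sq, hu j]; norm_num
    have hvuj : ⟪S - c • u j, u j⟫ = 0 := by
      rw [inner_sub_left, real_inner_smul_left, huj1, ← hc]; ring
    have hvS := h j _ hvuj
    have hself : ⟪S - c • u j, S - c • u j⟫ = 0 := by
      rw [inner_sub_right, hvS, real_inner_smul_right, hvuj]; ring
    have := inner_self_eq_zero.mp hself
    have := sub_eq_zero.mp this
    exact this
  have fwd : (∀ j, ∀ v : EuclideanSpace ℝ (Fin d), ⟪v, u j⟫ = 0 → ⟪v, S⟫ = 0) →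
      ∀ j k, u j = u k ∨ u j = -u k := by
    intro h j k
    have hj := key h j
    have hk := key h k
    set cj := ⟪S, u j⟫ with hcj
    set ck := ⟪S, u k⟫ with hck
    have habsj : |cj| = ‖S‖ := by
      have := congrArg norm hj
      rw [norm_smul, hu j, mul_one, Real.norm_eq_abs] at this
      exact this.symm
    have habsk : |ck| = ‖S‖ := by
      have := congrArg norm hk
      rw [norm_smul, hu k, mul_one, Real.norm_eq_abs] at this
      exact this.symm
    have hcj0 : cj ≠ 0 := by
      intro h0
      apply hS
      rw [hj, h0, zero_smul]
    rcases abs_eq_abs.mp (habsj.trans habsk.symm) with he | he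
    · left
      have : cj • u j = cj • u k := by rw [← hj, he, ← hk]
      exact smul_right_injective _ hcj0 this
    · right
      have : cj • u j = cj • (-u k) := by
        rw [← hj, smul_neg, ← neg_smul, he, neg_neg]; exact hk
      exact smul_right_injective _ hcj0 this
  have bwd : (∀ j k, u j = u k ∨ u j = -u k) →
      (∀ j, ∀ v : EuclideanSpace ℝ (Fin d), ⟪v, u j⟫ = 0 → ⟪v, S⟫ = 0) := by
    intro hpm j v hv
    rw [hSdef, inner_sum]
    apply Finset.sum_eq_zero
    intro i _
    rw [real_inner_smul_right]
    rcases hpm i j with h | h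
    · rw [h, hv, mul_zero]
    · rw [h, inner_neg_right, hv]; ring
  have pmJ : (∀ j k, u j = u k ∨ u j = -u k) →
      ∃ J : Finset (Fin n),
          (∀ i ∈ J, ∀ j ∈ J, u i = u j) ∧
          (∀ i ∉ J, ∀ j ∉ J, u i = u j) ∧
          (∀ i ∈ J, ∀ k ∉ J, u i = -u k) ∧
          (∑ i ∈ Jᶜ, l i < ∑ i ∈ J, l i ∨ ∑ i ∈ J, l i < ∑ i ∈ Jᶜ, l i) := by
    intro hpm
    set z := u ⟨0, hn⟩ with hz
    have hz1 : ‖z‖ = 1 := hu _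
    have hzz : z ≠ -z := by
      intro h
      have h2 : z + z = 0 := by
        nth_rewrite 1 [h]; simp
      have h3 : (2 : ℝ) • z = 0 := by rw [two_smul]; exact h2
      have h4 : z = 0 := by
        rcases smul_eq_zero.mp h3 with h | h
        · norm_num at h
        · exact h
      rw [h4, norm_zero] at hz1
      norm_num at hz1
    set J : Finset (Fin n) := Finset.univ.filter (fun i => u i = z) with hJ
    have memJ : ∀ i, i ∈ J ↔ u i = z := by intro i; simp [hJ]
    have hnotJ : ∀ i, i ∉ J → u i = -z := by
      intro i hi
      rcases hpm i ⟨0, hn⟩ with h | h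
      · exact absurd ((memJ i).mpr h) hi
      · exact h
    refine ⟨J, ?_, ?_, ?_, ?_⟩
    · intro i hi j hj; rw [(memJ i).mp hi, (memJ j).mp hj]
    · intro i hi j hj; rw [hnotJ i hi, hnotJ j hj]
    · intro i hi k hk; rw [(memJ i).mp hi, hnotJ k hk, neg_neg]
    · have hsplit : S = (∑ i ∈ J, l i - ∑ i ∈ Jᶜ, l i) • z := by
        rw [hSdef, ← Finset.sum_add_sum_compl J (fun i => l i • u i)]
        have h1 : ∑ i ∈ J, l i • u i = (∑ i ∈ J, l i) • z := by
          rw [Finset.sum_smul]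
          exact Finset.sum_congr rfl fun i hi => by rw [(memJ i).mp hi]
        have h2 : ∑ i ∈ Jᶜ, l i • u i = -((∑ i ∈ Jᶜ, l i) • z) := by
          have hc : ∀ i ∈ Jᶜ, l i • u i = -(l i • z) := fun i hi => by
            rw [hnotJ i (Finset.mem_compl.mp hi), smul_neg]
          rw [Finset.sum_congr rfl hc]
          simp [Finset.sum_smul]
        rw [h1, h2, sub_smul]
        abel
      have hne : ∑ i ∈ J, l i ≠ ∑ i ∈ Jᶜ, l i := by
        intro h
        apply hS
        rw [hsplit, h, sub_self, zero_smul]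
      rcases lt_or_gt_of_ne hne with h | h
      · right; exact h
      · left; exact h
  have Jpm : (∃ J : Finset (Fin n),
          (∀ i ∈ J, ∀ j ∈ J, u i = u j) ∧
          (∀ i ∉ J, ∀ j ∉ J, u i = u j) ∧
          (∀ i ∈ J, ∀ k ∉ J, u i = -u k) ∧
          (∑ i ∈ Jᶜ, l i < ∑ i ∈ J, l i ∨ ∑ i ∈ J, l i < ∑ i ∈ Jᶜ, l i)) →
      ∀ j k, u j = u k ∨ u j = -u k := by
    rintro ⟨J, h1, h2, h3, -⟩ j k
    by_cases hj : j ∈ J <;> by_cases hk : k ∈ J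
    · exact Or.inl (h1 j hj k hk)
    · exact Or.inr (h3 j hj k hk)
    · right; rw [h3 k hk j hj, neg_neg]
    · exact Or.inl (h2 j hj k hk)
  exact ⟨⟨fwd, bwd⟩, ⟨fun h => pmJ (fwd h), fun h => bwd (Jpm h)⟩⟩
end

section
/- Fix n and an ordered length vector. In the ℤ₂-vector space with basis indexed by subsets of {1,…,n}, the set of elements {w_J : |J| = n−k+1, n ∈ J} ∪ {v_K : |K| = n−k, n ∈ K}, where v_K denotes the basis element indexed by K and w_J = ∑_{j∈J} v_{J∖{j}}, is linearly independent and has cardinality C(n−1,k−1) + C(n−1,k) = C(n,k), hence forms a basis of the degree-(n−k) component (the span of all v_K with |K| = n−k together with the images of w_J). Precisely: the classes [W_J] and [V_K] with |J| = n−k+1, |K| = n−k, and n ∈ J, n ∈ K form a basis of H_{(d−1)k}((S^{d−1})ⁿ; ℤ₂). -/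
/- We model `H_{(d−1)k}(W;ℤ₂)`, `W = (S^{d−1})ⁿ`, inside the free `ℤ₂`-module on the
subsets of `{1,…,n}`: the basis element `K` is the class `[V_K]`, and the degree
`(d−1)k` component is the span of the `[V_K]` with `|K| = n − k`.  The class of the
partial diagonal is `[W_J] = ∑_{j∈J} [V_{J∖{j}}]`. -/

/-- The class `[V_K]`. -/
noncomputable def Vclass {n : ℕ} (K : Finset (Fin n)) : Finset (Fin n) →₀ ZMod 2 :=
  Finsupp.single K 1

/-- The class `[W_J]` of the partial diagonal. -/
noncomputable def Wclass {n : ℕ} (J : Finset (Fin n)) : Finset (Fin n) →₀ ZMod 2 :=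
  ∑ j ∈ J, Vclass (J.erase j)

lemma card_subsets_mem {n : ℕ} (a : Fin n) (m : ℕ) (hm : 1 ≤ m) :
    Nat.card {A : Finset (Fin n) // A.card = m ∧ a ∈ A} = Nat.choose (n - 1) (m - 1) := by
  rw [Nat.card_eq_fintype_card, Fintype.card_subtype]
  have : (Finset.univ.filter fun A : Finset (Fin n) => A.card = m ∧ a ∈ A).card =
      ((Finset.univ.erase a).powersetCard (m - 1)).card := by
    refine Finset.card_bij' (fun A _ => A.erase a) (fun B _ => insert a B) ?hi ?hj ?li ?ri
    case hi =>
      intro A hA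
      simp only [Finset.mem_filter, Finset.mem_univ, true_and] at hA
      rw [Finset.mem_powersetCard]
      exact ⟨Finset.erase_subset_erase a (Finset.subset_univ A),
        by rw [Finset.card_erase_of_mem hA.2, hA.1]⟩
    case hj =>
      intro B hB
      rw [Finset.mem_powersetCard] at hB
      have haB : a ∉ B := fun h => (Finset.mem_erase.mp (hB.1 h)).1 rfl
      simp only [Finset.mem_filter, Finset.mem_univ, true_and]
      exact ⟨by rw [Finset.card_insert_of_notMem haB, hB.2]; omega, Finset.mem_insert_self a B⟩
    case li =>
      intro A hA
      simp only [Finset.mem_filter, Finset.mem_univ, true_and] at hA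
      exact Finset.insert_erase hA.2
    case ri =>
      intro B hB
      rw [Finset.mem_powersetCard] at hB
      exact Finset.erase_insert fun h => (Finset.mem_erase.mp (hB.1 h)).1 rfl
  rw [this, Finset.card_powersetCard, Finset.card_erase_of_mem (Finset.mem_univ a),
    Finset.card_univ, Fintype.card_fin]


lemma Vclass_apply {n : ℕ} (K S : Finset (Fin n)) :
    Vclass K S = if K = S then 1 else 0 := Finsupp.single_apply

lemma Wclass_apply {n : ℕ} (J S : Finset (Fin n)) :
    Wclass J S = ∑ j ∈ J, if J.erase j = S then (1 : ZMod 2) else 0 := by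
  unfold Wclass
  rw [Finsupp.finset_sum_apply]
  exact Finset.sum_congr rfl fun j _ => Vclass_apply _ _

lemma erase_eq_erase {n : ℕ} {a : Fin n} {s t : Finset (Fin n)} (hs : a ∈ s) (ht : a ∈ t)
    (h : s.erase a = t.erase a) : s = t := by
  rw [← Finset.insert_erase hs, ← Finset.insert_erase ht, h]

lemma key1 {n : ℕ} {a : Fin n} {J J' : Finset (Fin n)} (hJ : a ∈ J) (hJ' : a ∈ J') :
    Wclass J' (J.erase a) = if J' = J then (1 : ZMod 2) else 0 := by
  rw [Wclass_apply]
  by_cases hJJ : J' = J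
  · subst hJJ
    rw [if_pos rfl]
    have h1 : ∀ j ∈ J', (if J'.erase j = J'.erase a then (1 : ZMod 2) else 0)
        = if j = a then 1 else 0 := fun j hj => if_congr (Finset.erase_inj J' hj) rfl rfl
    rw [Finset.sum_congr rfl h1, Finset.sum_ite_eq' J' a (fun _ => (1 : ZMod 2)), if_pos hJ']
  · rw [if_neg hJJ]
    apply Finset.sum_eq_zero
    intro j hj
    rw [if_neg]
    intro h
    by_cases hja : j = a
    · exact hJJ (erase_eq_erase hJ' hJ (hja ▸ h))
    · exact (Finset.notMem_erase a J) (h ▸ Finset.mem_erase.mpr ⟨Ne.symm hja, hJ'⟩)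

/-- The classes `[W_J]` and `[V_K]` with `|J| = n−k+1`, `|K| = n−k`,
`n ∈ J`, `n ∈ K` are linearly independent, there are
`C(n−1,k−1) + C(n−1,k) = C(n,k)` of them, and they form a basis of
`H_{(d−1)k}((S^{d−1})ⁿ;ℤ₂)`, i.e. they span the span of all `[V_K]` with
`|K| = n−k`. -/
theorem stmt_13 {n k : ℕ} (d : ℕ) (hd : 2 ≤ d) (hn : 0 < n) (hk : 1 ≤ k) (hkn : k ≤ n) :
    ∀ last : Fin n, last = ⟨n - 1, by omega⟩ →
    ∀ φ : {J : Finset (Fin n) // J.card = n - k + 1 ∧ last ∈ J} ⊕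
          {K : Finset (Fin n) // K.card = n - k ∧ last ∈ K} →
          (Finset (Fin n) →₀ ZMod 2),
      φ = Sum.elim (fun J => Wclass J.1) (fun K => Vclass K.1) →
      (Nat.card {J : Finset (Fin n) // J.card = n - k + 1 ∧ last ∈ J} =
          Nat.choose (n - 1) (k - 1) ∧
        Nat.card {K : Finset (Fin n) // K.card = n - k ∧ last ∈ K} =
          Nat.choose (n - 1) k ∧
        Nat.choose (n - 1) (k - 1) + Nat.choose (n - 1) k = Nat.choose n k) ∧
      LinearIndependent (ZMod 2) φ ∧
      Submodule.span (ZMod 2) (Set.range φ) =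
        Submodule.span (ZMod 2) (Vclass '' {K : Finset (Fin n) | K.card = n - k}) := by

  intro last hlast φ hφ
  subst hφ
  refine ⟨⟨?_, ?_, ?_⟩, ?_, ?_⟩
  · rw [card_subsets_mem last (n - k + 1) (by omega)]
    have h1 : n - k + 1 - 1 = (n - 1) - (k - 1) := by omega
    rw [h1, Nat.choose_symm (by omega)]
  · rcases Nat.lt_or_ge k n with h | h
    · rw [card_subsets_mem last (n - k) (by omega)]
      have h1 : n - k - 1 = (n - 1) - k := by omega
      rw [h1, Nat.choose_symm (by omega)]
    · have hkn' : k = n := le_antisymm hkn h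
      have he : IsEmpty {K : Finset (Fin n) // K.card = n - k ∧ last ∈ K} := by
        constructor
        rintro ⟨K, hK, hmem⟩
        have : K = ∅ := Finset.card_eq_zero.mp (by omega)
        exact absurd hmem (this ▸ Finset.notMem_empty _)
      rw [Nat.card_of_isEmpty]
      exact (Nat.choose_eq_zero_of_lt (by omega)).symm
  · obtain ⟨n', rfl⟩ : ∃ n', n = n' + 1 := ⟨n - 1, by omega⟩
    obtain ⟨k', rfl⟩ : ∃ k', k = k' + 1 := ⟨k - 1, by omega⟩
    simp only [Nat.add_sub_cancel]
    exact (Nat.choose_succ_succ n' k').symm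
  · rw [Fintype.linearIndependent_iff]
    intro g hg
    have hval : ∀ S : Finset (Fin n),
        (∑ J : {J : Finset (Fin n) // J.card = n - k + 1 ∧ last ∈ J},
          g (Sum.inl J) • (Wclass J.1) S) +
        (∑ K : {K : Finset (Fin n) // K.card = n - k ∧ last ∈ K},
          g (Sum.inr K) • (Vclass K.1) S) = 0 := by
      intro S
      have h := congrArg (fun f : Finset (Fin n) →₀ ZMod 2 => f S) hg
      simp only [Finsupp.finset_sum_apply, Finsupp.smul_apply, Finsupp.coe_zero,
        Pi.zero_apply] at h
      rw [Fintype.sum_sum_type] at h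
      simpa using h
    have hinl : ∀ J, g (Sum.inl J) = 0 := by
      intro J
      have h := hval (J.1.erase last)
      have h2 : ∀ K : {K : Finset (Fin n) // K.card = n - k ∧ last ∈ K},
          g (Sum.inr K) • (Vclass K.1) (J.1.erase last) = 0 := by
        intro K
        have hz : (Vclass K.1) (J.1.erase last) = 0 := by
          rw [Vclass_apply, if_neg]
          intro he
          exact (Finset.notMem_erase last J.1) (he ▸ K.2.2)
        rw [hz, smul_zero]
      rw [Finset.sum_eq_zero (fun K _ => h2 K), add_zero] at h
      have h1 : ∀ J' : {J' : Finset (Fin n) // J'.card = n - k + 1 ∧ last ∈ J'},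
          g (Sum.inl J') • (Wclass J'.1) (J.1.erase last)
            = if J' = J then g (Sum.inl J) else 0 := by
        intro J'
        rw [key1 J.2.2 J'.2.2]
        by_cases hJJ : J' = J
        · rw [if_pos (Subtype.ext_iff.mp hJJ), if_pos hJJ, hJJ, smul_eq_mul, mul_one]
        · rw [if_neg (fun h => hJJ (Subtype.ext h)), if_neg hJJ, smul_zero]
      rw [Finset.sum_congr rfl (fun J' _ => h1 J'),
        Finset.sum_ite_eq' Finset.univ J (fun _ => g (Sum.inl J)),
        if_pos (Finset.mem_univ J)] at h
      exact h
    refine fun i => ?_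
    cases i with
    | inl J => exact hinl J
    | inr K =>
      have h := hval K.1
      rw [Finset.sum_eq_zero (fun J _ => by rw [hinl J, zero_smul]), zero_add] at h
      have h1 : ∀ K' : {K' : Finset (Fin n) // K'.card = n - k ∧ last ∈ K'},
          g (Sum.inr K') • (Vclass K'.1) K.1
            = if K' = K then g (Sum.inr K) else 0 := by
        intro K'
        rw [Vclass_apply]
        by_cases hKK : K' = K
        · rw [if_pos (Subtype.ext_iff.mp hKK), if_pos hKK, hKK, smul_eq_mul, mul_one]
        · rw [if_neg (fun h => hKK (Subtype.ext h)), if_neg hKK, smul_zero]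
      rw [Finset.sum_congr rfl (fun K' _ => h1 K'),
        Finset.sum_ite_eq' Finset.univ K (fun _ => g (Sum.inr K)),
        if_pos (Finset.mem_univ K)] at h
      exact h
  · apply le_antisymm <;> rw [Submodule.span_le]
    · rintro _ ⟨i, rfl⟩
      cases i with
      | inl J =>
        show Wclass J.1 ∈ _
        unfold Wclass
        apply Submodule.sum_mem
        intro j hj
        apply Submodule.subset_span
        refine ⟨J.1.erase j, ?_, rfl⟩
        show (J.1.erase j).card = n - k
        rw [Finset.card_erase_of_mem hj, J.2.1]
        omega
      | inr K =>
        exact Submodule.subset_span ⟨K.1, K.2.1, rfl⟩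
    · rintro _ ⟨K, hK, rfl⟩
      have hK : K.card = n - k := hK
      by_cases hmem : last ∈ K
      · exact Submodule.subset_span ⟨Sum.inr ⟨K, hK, hmem⟩, rfl⟩
      · set J := insert last K with hJdef
        have hJcard : J.card = n - k + 1 := by
          rw [hJdef, Finset.card_insert_of_notMem hmem, hK]
        have hJmem : last ∈ J := Finset.mem_insert_self _ _
        have hW : Wclass J = Vclass K + ∑ j ∈ K, Vclass (J.erase j) := by
          unfold Wclass
          rw [hJdef, Finset.sum_insert hmem, Finset.erase_insert hmem]
        have hV : Vclass K = Wclass J - ∑ j ∈ K, Vclass (J.erase j) := by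
          rw [hW, add_sub_cancel_right]
        rw [hV]
        apply Submodule.sub_mem
        · exact Submodule.subset_span ⟨Sum.inl ⟨J, hJcard, hJmem⟩, rfl⟩
        · apply Submodule.sum_mem
          intro j hj
          have hjlast : j ≠ last := fun h => hmem (h ▸ hj)
          have h1 : last ∈ J.erase j := Finset.mem_erase.mpr ⟨hjlast.symm, hJmem⟩
          have h2 : (J.erase j).card = n - k := by
            rw [Finset.card_erase_of_mem (Finset.mem_insert_of_mem hj), hJcard]
            omega
          exact Submodule.subset_span ⟨Sum.inr ⟨J.erase j, h2, h1⟩, rfl⟩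
end

section
/- The length vectors ℓ = (1,2,2,2,4,4) and ℓ' = (1,1,3,4,8,8) in ℝ⁶ are both generic, the counts a_k(ℓ) = a_k(ℓ') agree for all k = 0,…,4, yet ℓ and ℓ' lie in different chambers: the subset J = {1,4,6} is short with respect to ℓ but long with respect to ℓ'. -/
/-- A subset `J` is long with respect to `l` if `∑_{j∈J} l_j > ∑_{j∉J} l_j`. -/
def IsLong {n : ℕ} (l : Fin n → ℝ) (J : Finset (Fin n)) : Prop :=
  ∑ j ∈ Jᶜ, l j < ∑ j ∈ J, l j

/-- A subset `J` is short with respect to `l` if `∑_{j∈J} l_j < ∑_{j∉J} l_j`. -/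
def IsShort {n : ℕ} (l : Fin n → ℝ) (J : Finset (Fin n)) : Prop :=
  ∑ j ∈ J, l j < ∑ j ∈ Jᶜ, l j

/-- `l` is a generic length vector: no subset is median. -/
def IsGeneric {n : ℕ} (l : Fin n → ℝ) : Prop :=
  ∀ J : Finset (Fin n), ∑ j ∈ J, l j ≠ ∑ j ∈ Jᶜ, l j

/-- `a_k(l)`: the number of short subsets `J` with `n ∈ J` (here the last index `5`)
and `|J| = k + 1`. -/
noncomputable def aCount (l : Fin 6 → ℝ) (k : ℕ) : ℕ :=
  {J : Finset (Fin 6) | (5 : Fin 6) ∈ J ∧ J.card = k + 1 ∧ IsShort l J}.ncard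

namespace StmtAux

def L1 : Fin 6 → ℤ := ![1, 2, 2, 2, 4, 4]
def L2 : Fin 6 → ℤ := ![1, 1, 3, 4, 8, 8]

lemma l1_eq : ![(1 : ℝ), 2, 2, 2, 4, 4] = fun j => ((L1 j : ℤ) : ℝ) := by
  funext j; fin_cases j <;> norm_num [L1, Matrix.cons_val_succ]

lemma l2_eq : ![(1 : ℝ), 1, 3, 4, 8, 8] = fun j => ((L2 j : ℤ) : ℝ) := by
  funext j; fin_cases j <;> norm_num [L2, Matrix.cons_val_succ]

lemma sum_cast (l : Fin 6 → ℤ) (J : Finset (Fin 6)) :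
    ∑ j ∈ J, ((l j : ℝ)) = ((∑ j ∈ J, l j : ℤ) : ℝ) := by
  push_cast; rfl

lemma generic_int (l : Fin 6 → ℤ)
    (h : ∀ J : Finset (Fin 6), ∑ j ∈ J, l j ≠ ∑ j ∈ Jᶜ, l j) :
    IsGeneric (fun j => (l j : ℝ)) := by
  intro J
  rw [sum_cast, sum_cast]
  exact_mod_cast h J

lemma aCount_int (l : Fin 6 → ℤ) (k : ℕ) :
    aCount (fun j => (l j : ℝ)) k =
    (Finset.univ.filter (fun J : Finset (Fin 6) =>
      (5 : Fin 6) ∈ J ∧ J.card = k + 1 ∧ ∑ j ∈ J, l j < ∑ j ∈ Jᶜ, l j)).card := by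
  rw [aCount]
  have : {J : Finset (Fin 6) | (5 : Fin 6) ∈ J ∧ J.card = k + 1 ∧
      IsShort (fun j => (l j : ℝ)) J} =
      ↑(Finset.univ.filter (fun J : Finset (Fin 6) =>
        (5 : Fin 6) ∈ J ∧ J.card = k + 1 ∧ ∑ j ∈ J, l j < ∑ j ∈ Jᶜ, l j)) := by
    ext J
    simp only [Set.mem_setOf_eq, Finset.coe_filter, Finset.mem_univ, true_and]
    rw [IsShort, sum_cast, sum_cast, Int.cast_lt]
  rw [this, Set.ncard_coe_finset]

lemma filter_empty_of_big (l : Fin 6 → ℤ) (k : ℕ) (hk : 6 ≤ k) :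
    (Finset.univ.filter (fun J : Finset (Fin 6) =>
      (5 : Fin 6) ∈ J ∧ J.card = k + 1 ∧ ∑ j ∈ J, l j < ∑ j ∈ Jᶜ, l j)).card = 0 := by
  rw [Finset.card_eq_zero, Finset.filter_eq_empty_iff]
  rintro J - ⟨-, hcard, -⟩
  have := J.card_le_univ
  simp [hcard] at this
  omega

end StmtAux

open StmtAux in
/-- The length vectors `l = (1,2,2,2,4,4)` and `l' = (1,1,3,4,8,8)` are
both generic, the counts `a_k(l) = a_k(l')` agree for all `k`, yet `l` and `l'` lie in
different chambers: the subset `J = {1,4,6}` (zero-indexed `{0,3,5}`) is short with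
respect to `l` but long with respect to `l'`. -/
theorem stmt_18 :
    IsGeneric ![(1 : ℝ), 2, 2, 2, 4, 4] ∧ IsGeneric ![(1 : ℝ), 1, 3, 4, 8, 8] ∧
    (∀ k : ℕ, aCount ![(1 : ℝ), 2, 2, 2, 4, 4] k = aCount ![(1 : ℝ), 1, 3, 4, 8, 8] k) ∧
    IsShort ![(1 : ℝ), 2, 2, 2, 4, 4] {0, 3, 5} ∧
    IsLong ![(1 : ℝ), 1, 3, 4, 8, 8] {0, 3, 5} := by
  refine ⟨?_, ?_, ?_, ?_, ?_⟩
  · rw [l1_eq]; exact generic_int L1 (by decide)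
  · rw [l2_eq]; exact generic_int L2 (by decide)
  · intro k
    rw [l1_eq, l2_eq, aCount_int, aCount_int]
    rcases lt_or_ge k 6 with hk | hk
    · interval_cases k <;> decide
    · rw [filter_empty_of_big _ _ hk, filter_empty_of_big _ _ hk]
  · rw [l1_eq, IsShort, sum_cast, sum_cast]
    norm_cast
  · rw [l2_eq, IsLong, sum_cast, sum_cast]
    norm_cast
end
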